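/- Let N ∈ ℕ, let G be an N×N complex matrix, and let u_in ∈ ℂ^N. For f ∈ ℝ^N such that the matrix I − G·diag(f) is invertible, define u(f) = (I − G·diag(f))⁻¹ u_in and h(f) = diag(f)·u(f) ∈ ℂ^N. Then, at any such f, the map h : ℝ^N → ℂ^N is differentiable (as a map between real vector spaces), and its derivative at f in the direction v ∈ ℝ^N is given by d h(f; v) = (I + diag(f)·(I − G·diag(f))⁻¹·G) · diag(u(f)) · v; equivalently, the Jacobian matrix of h at f is J_h(f) = (I + diag(f)·(I − G·diag(f))⁻¹·G) · diag(u(f)). -/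

import Mathlib

open Matrix

/-- `diagC f` : the N×N complex diagonal matrix with the (real) entries of `f`
on the diagonal. -/
noncomputable def diagC {N : ℕ} (f : Fin N → ℝ) : Matrix (Fin N) (Fin N) ℂ :=
  Matrix.diagonal fun i => (f i : ℂ)

/-- The total field `u(f) = (I − G·diag(f))⁻¹ u_in` of the discrete
Lippmann–Schwinger equation. -/
noncomputable def totalField {N : ℕ} (G : Matrix (Fin N) (Fin N) ℂ)
    (uin : Fin N → ℂ) (f : Fin N → ℝ) : Fin N → ℂ :=
  (1 - G * diagC f)⁻¹ *ᵥ uin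

/-- `h(f) = diag(f)·u(f)`. -/
noncomputable def hMap {N : ℕ} (G : Matrix (Fin N) (Fin N) ℂ)
    (uin : Fin N → ℂ) (f : Fin N → ℝ) : Fin N → ℂ :=
  diagC f *ᵥ totalField G uin f

/-! Inversion is differentiable at every unit of a Banach algebra, with derivative
`t ↦ -a⁻¹ t a⁻¹`. Writing `h(f) = (D f · (1 - G · D f)⁻¹) u_in` with `D = diag`
linear, the product rule gives the derivative `D v · R + D f · R G (D v) R = (1 + D f · R G) (D v) R`,
where `R = (1 - G · D f)⁻¹`; applied to `u_in` this is `(1 + D f · R G) diag(v) u(f)`, and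
`diag(v) u = diag(u) v`. -/

section RingInverse

open ContinuousLinearMap
open scoped Ring

variable {𝕜 E R : Type*} [NontriviallyNormedField 𝕜] [NormedAddCommGroup E] [NormedSpace 𝕜 E]
  [NormedRing R] [HasSummableGeomSeries R] [NormedAlgebra 𝕜 R]

theorem HasFDerivAt.ringInverse {a : E → R} {a' : E →L[𝕜] R} {x : E}
    (ha : HasFDerivAt a a' x) (hx : IsUnit (a x)) :
    HasFDerivAt (fun y => (a y)⁻¹ʳ) (-(mulLeftRight 𝕜 R (a x)⁻¹ʳ (a x)⁻¹ʳ).comp a') x := by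
  obtain ⟨u, hu⟩ := hx
  have := hasFDerivAt_ringInverse (𝕜 := 𝕜) u
  rw [← Ring.inverse_unit, hu] at this
  exact this.comp x ha

theorem hasFDerivAt_mul_ringInverse_one_sub_mul (D : E →L[𝕜] R) (g : R) {x : E}
    (hx : IsUnit (1 - g * D x)) :
    HasFDerivAt (fun y => D y * (1 - g * D y)⁻¹ʳ)
      ((mulLeftRight 𝕜 R (1 + D x * (1 - g * D x)⁻¹ʳ * g) (1 - g * D x)⁻¹ʳ).comp D) x := by
  have hA : HasFDerivAt (fun y => 1 - g * D y) (-(g • D)) x :=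
    (D.hasFDerivAt.const_mul g).const_sub 1
  refine (D.hasFDerivAt.mul' (hA.ringInverse hx)).congr_fderiv ?_
  ext v
  simp only [comp_neg, neg_neg, _root_.add_apply, _root_.smul_apply,
    ContinuousLinearMap.comp_apply, smul_eq_mul, mulLeftRight_apply, MulOpposite.smul_eq_mul_unop,
    MulOpposite.unop_op, map_add, add_comp, one_mul]
  noncomm_ring

end RingInverse

section Matrix

open scoped Ring

variable {N : ℕ}

-- Matrices carry no global norm; any norm gives the same derivative, and the `ℓ∞` operator norm
-- makes them a Banach algebra.
attribute [local instance] Matrix.linftyOpNormedRing Matrix.linftyOpNormedAlgebra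

noncomputable def diagCLM (N : ℕ) : (Fin N → ℝ) →L[ℝ] Matrix (Fin N) (Fin N) ℂ :=
  LinearMap.toContinuousLinearMap
    { toFun := diagC
      map_add' := fun a b => by simp [diagC]
      map_smul' := fun r a => by simp [diagC, ← diagonal_smul, Complex.real_smul] }

noncomputable def mulVecCLM (u : Fin N → ℂ) : Matrix (Fin N) (Fin N) ℂ →L[ℝ] (Fin N → ℂ) :=
  LinearMap.toContinuousLinearMap
    { toFun := (· *ᵥ u)
      map_add' := (add_mulVec · · u)
      map_smul' := (smul_mulVec · · u) }

theorem hMap_eq_mul_ringInverse_mulVec (G : Matrix (Fin N) (Fin N) ℂ) (uin : Fin N → ℂ) :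
    hMap G uin = fun f => (diagC f * (1 - G * diagC f)⁻¹ʳ) *ᵥ uin := by
  ext f
  rw [hMap, totalField, mulVec_mulVec, nonsing_inv_eq_ringInverse]

theorem diagC_mulVec (v : Fin N → ℝ) (w : Fin N → ℂ) :
    diagC v *ᵥ w = diagonal w *ᵥ fun i => (v i : ℂ) := by
  ext i
  simp [diagC, mulVec_diagonal, mul_comm]

theorem exists_hasFDerivAt_hMap (G : Matrix (Fin N) (Fin N) ℂ) (uin : Fin N → ℂ) {f : Fin N → ℝ}
    (hinv : IsUnit (1 - G * diagC f)) :
    ∃ L : (Fin N → ℝ) →L[ℝ] (Fin N → ℂ), HasFDerivAt (hMap G uin) L f ∧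
      ∀ v, L v = ((1 + diagC f * (1 - G * diagC f)⁻¹ * G) * diagonal (totalField G uin f)) *ᵥ
        fun i => (v i : ℂ) := by
  refine ⟨?L, ?deriv, fun v => ?_⟩
  case deriv =>
    rw [hMap_eq_mul_ringInverse_mulVec]
    exact (mulVecCLM uin).hasFDerivAt.comp f
      (hasFDerivAt_mul_ringInverse_one_sub_mul (diagCLM N) G hinv)
  -- `simp` cannot see through the normed-algebra instances, which are only defeq to the plain ones
  change ((1 + diagC f * (1 - G * diagC f)⁻¹ʳ * G) * diagC v * (1 - G * diagC f)⁻¹ʳ) *ᵥ uin = _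
  rw [← nonsing_inv_eq_ringInverse, ← mulVec_mulVec, ← mulVec_mulVec, ← mulVec_mulVec,
    diagC_mulVec]
  rfl

end Matrix

theorem jacobian_of_lippmann_schwinger_model
    (N : ℕ) (G : Matrix (Fin N) (Fin N) ℂ) (uin : Fin N → ℂ)
    (f : Fin N → ℝ) (hinv : IsUnit (1 - G * diagC f)) :
    DifferentiableAt ℝ (hMap G uin) f ∧
    ∀ v : Fin N → ℝ,
      fderiv ℝ (hMap G uin) f v
        = ((1 + diagC f * (1 - G * diagC f)⁻¹ * G)
            * Matrix.diagonal (totalField G uin f)) *ᵥ (fun i => (v i : ℂ)) := by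
  obtain ⟨L, hL, hL_apply⟩ := exists_hasFDerivAt_hMap G uin hinv
  exact ⟨hL.differentiableAt, fun v => hL.fderiv ▸ hL_apply v⟩
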